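/- arXiv:2009.14500 — 2 statements merged into one kernel-verified Lean document; each statement's English description precedes it below -/
import Mathlib

section
/- Let N be a positive integer, κ = (N!)^{−1/N}, let G be gamma distributed with shape N and rate 1, let W be a nonnegative random variable independent of G, and let s ≥ 0. Then Pr(G ≥ sW) ≤ Σ_{n=1}^{N} C(N, n) (−1)^{n+1} E[exp(−nκsW)], where C(N, n) denotes the binomial coefficient. -/
/-!
Conditioning on `W` reduces the claim to the tail bound `Pr(G ≥ y) ≤ 1 - (1 - e^{-κy})^N`, Alzer's
lower bound on the gamma cdf; the binomial theorem then expands `1 - (1 - e^{-κsW})^N` into the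
alternating sum of Laplace transforms.

For the tail bound let `p` be the density of `G` and `q` the derivative of `(1 - e^{-κy})^N`.
Since `κ^N N! = 1`, `p = q · exp h` with `h x = (κ - 1) x + (N - 1) φ (κ x)`, where
`φ u = log (u / (1 - e^{-u}))` is concave with `φ 0⁺ = 0`. Hence `φ u / u` decreases, so `p - q`
changes sign at most once, from `+` to `-`, and `cdf - (1 - e^{-κ·})^N`, which vanishes at `0` and
at `∞`, first increases and then decreases: it is nonnegative.
-/

open MeasureTheory ProbabilityTheory
open Real Set Filter Topology
open scoped Nat

theorem ConcaveOn.antitoneOn_div_self_of_tendsto_zero {g : ℝ → ℝ}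
    (hg : ConcaveOn ℝ (Ioi 0) g) (h0 : Tendsto g (𝓝[>] 0) (𝓝 0)) :
    AntitoneOn (fun u ↦ g u / u) (Ioi 0) := by
  intro u (hu : 0 < u) v (hv : 0 < v) huv
  rcases huv.eq_or_lt with rfl | huv
  · rfl
  have hslope : (g v - g u) / (v - u) ≤ g u / u := by
    have hlim : Tendsto (fun ε ↦ (g u - g ε) / (u - ε)) (𝓝[>] 0) (𝓝 ((g u - 0) / (u - 0))) :=
      (tendsto_const_nhds.sub h0).div
        (tendsto_const_nhds.sub (tendsto_nhdsWithin_of_tendsto_nhds tendsto_id))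
        (by simpa using hu.ne')
    rw [sub_zero, sub_zero] at hlim
    refine ge_of_tendsto hlim ?_
    filter_upwards [Ioo_mem_nhdsGT hu] with ε hε
    exact hg.slope_anti_adjacent hε.1 hv hε.2 huv
  rw [div_le_div_iff₀ (sub_pos.2 huv) hu] at hslope
  rw [div_le_div_iff₀ hv hu]
  linarith

theorem nonneg_of_hasDerivAt_nonneg_then_nonpos {f f' : ℝ → ℝ}
    (hf : ∀ x, HasDerivAt f (f' x) x) (h0 : f 0 = 0) (hlim : Tendsto f atTop (𝓝 0))
    (hsign : ∀ ⦃t x⦄, 0 < t → t ≤ x → 0 ≤ f' x → 0 ≤ f' t) {x : ℝ} (hx : 0 ≤ x) :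
    0 ≤ f x := by
  have hcont : Continuous f := continuous_iff_continuousAt.2 fun x ↦ (hf x).continuousAt
  by_cases hinc : ∀ t ∈ Ioo 0 x, 0 ≤ f' t
  · have hmono : MonotoneOn f (Icc 0 x) :=
      monotoneOn_of_hasDerivWithinAt_nonneg (convex_Icc 0 x) hcont.continuousOn
        (fun t _ ↦ (hf t).hasDerivWithinAt) (by rwa [interior_Icc])
    simpa [h0] using hmono (left_mem_Icc.2 hx) (right_mem_Icc.2 hx) hx
  · push Not at hinc
    obtain ⟨t₀, ⟨ht₀, ht₀x⟩, hneg⟩ := hinc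
    have hanti : AntitoneOn f (Ici t₀) := by
      refine antitoneOn_of_hasDerivWithinAt_nonpos (convex_Ici t₀) hcont.continuousOn
        (fun t _ ↦ (hf t).hasDerivWithinAt) ?_
      rw [interior_Ici]
      intro t (ht : t₀ < t)
      by_contra! hpos
      exact hneg.not_ge (hsign ht₀ ht.le hpos.le)
    refine le_of_tendsto hlim ?_
    filter_upwards [eventually_ge_atTop x] with y hy
    exact hanti (mem_Ici.2 ht₀x.le) (mem_Ici.2 (ht₀x.le.trans hy)) hy

theorem Real.one_sub_exp_neg_pos {u : ℝ} (hu : 0 < u) : 0 < 1 - exp (-u) := by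
  have := Real.exp_lt_one_iff.2 (neg_lt_zero.2 hu)
  linarith

theorem Real.sq_mul_exp_neg_le_sq_one_sub_exp_neg {u : ℝ} (hu : 0 ≤ u) :
    u ^ 2 * exp (-u) ≤ (1 - exp (-u)) ^ 2 := by
  have hsinh : u / 2 ≤ sinh (u / 2) := self_le_sinh_iff.2 (by positivity)
  have hhalf : u * exp (-(u / 2)) ≤ 1 - exp (-u) := by
    have hsinh_mul : 2 * sinh (u / 2) * exp (-(u / 2)) = 1 - exp (-u) := by
      have h1 : exp (u / 2) * exp (-(u / 2)) = 1 := by rw [← exp_add]; simp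
      have h2 : exp (-(u / 2)) * exp (-(u / 2)) = exp (-u) := by rw [← exp_add]; ring_nf
      rw [sinh_eq]
      linear_combination h1 - h2
    calc u * exp (-(u / 2)) = 2 * (u / 2) * exp (-(u / 2)) := by ring
      _ ≤ 2 * sinh (u / 2) * exp (-(u / 2)) := by gcongr
      _ = 1 - exp (-u) := hsinh_mul
  calc u ^ 2 * exp (-u) = (u * exp (-(u / 2))) ^ 2 := by
        rw [mul_pow, ← exp_nat_mul]; ring_nf
    _ ≤ (1 - exp (-u)) ^ 2 := pow_le_pow_left₀ (by positivity) hhalf 2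

theorem concaveOn_log_sub_log_one_sub_exp_neg :
    ConcaveOn ℝ (Ioi 0) (fun u ↦ log u - log (1 - exp (-u))) := by
  have hE : ∀ u, HasDerivAt (fun u ↦ 1 - exp (-u)) (exp (-u)) u := fun u ↦ by
    simpa using ((hasDerivAt_neg u).exp).const_sub 1
  have hg' : ∀ u ∈ Ioi (0 : ℝ), HasDerivAt (fun u ↦ log u - log (1 - exp (-u)))
      (u⁻¹ - exp (-u) / (1 - exp (-u))) u := fun u hu ↦
    (hasDerivAt_log (ne_of_gt hu)).sub ((hE u).log (one_sub_exp_neg_pos hu).ne')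
  have hg'' : ∀ u ∈ Ioi (0 : ℝ), HasDerivAt (fun u ↦ u⁻¹ - exp (-u) / (1 - exp (-u)))
      (exp (-u) / (1 - exp (-u)) ^ 2 - (u ^ 2)⁻¹) u := fun u hu ↦ by
    have hpos := one_sub_exp_neg_pos hu
    refine ((hasDerivAt_inv hu.ne').fun_sub
      (((hasDerivAt_neg u).exp).fun_div (hE u) hpos.ne')).congr_deriv ?_
    field_simp
    ring
  refine concaveOn_of_hasDerivWithinAt2_nonpos (convex_Ioi 0)
    (f' := fun u ↦ u⁻¹ - exp (-u) / (1 - exp (-u)))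
    (f'' := fun u ↦ exp (-u) / (1 - exp (-u)) ^ 2 - (u ^ 2)⁻¹)
    (fun u hu ↦ (hg' u hu).continuousAt.continuousWithinAt) ?_ ?_ ?_ <;> rw [interior_Ioi]
  · exact fun u hu ↦ (hg' u hu).hasDerivWithinAt
  · exact fun u hu ↦ (hg'' u hu).hasDerivWithinAt
  · intro u (hu : 0 < u)
    have hpos := one_sub_exp_neg_pos hu
    rw [sub_nonpos, div_le_iff₀ (by positivity), ← div_eq_inv_mul, le_div_iff₀ (by positivity)]
    linarith [sq_mul_exp_neg_le_sq_one_sub_exp_neg hu.le]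

theorem tendsto_log_sub_log_one_sub_exp_neg_nhdsGT_zero :
    Tendsto (fun u ↦ log u - log (1 - exp (-u))) (𝓝[>] 0) (𝓝 0) := by
  have hslope : Tendsto (fun u ↦ (1 - exp (-u)) / u) (𝓝[>] 0) (𝓝 1) := by
    have := ((hasDerivAt_neg (0 : ℝ)).exp.neg).tendsto_slope_zero_right
    simp only [Pi.neg_apply, neg_zero, exp_zero, zero_add, smul_eq_mul, mul_neg, mul_one,
      neg_neg] at this
    refine this.congr fun u ↦ ?_
    ring
  have hlog := ((continuousAt_log one_ne_zero).tendsto.comp hslope).neg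
  rw [log_one, neg_zero] at hlog
  refine hlog.congr' ?_
  filter_upwards [self_mem_nhdsWithin] with u (hu : 0 < u)
  simp [log_div (one_sub_exp_neg_pos hu).ne' hu.ne']

theorem gammaPDFReal_natCast_add_one (m : ℕ) {x : ℝ} (hx : 0 ≤ x) :
    gammaPDFReal ((m + 1 : ℕ) : ℝ) 1 x = x ^ m * exp (-x) / m ! := by
  rw [gammaPDFReal, if_pos hx, one_rpow, Nat.cast_add_one, Gamma_nat_eq_factorial,
    add_sub_cancel_right, rpow_natCast, one_mul]
  ring

theorem cdf_gammaMeasure_natCast_add_one (m : ℕ) {y : ℝ} (hy : 0 ≤ y) :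
    cdf (gammaMeasure ((m + 1 : ℕ) : ℝ) 1) y = ∫ x in 0..y, x ^ m * exp (-x) / m ! := by
  rw [cdf_gammaMeasure_eq_integral (by positivity) one_pos,
    setIntegral_eq_of_subset_of_forall_sdiff_eq_zero (s := Icc 0 y) measurableSet_Iic
      Icc_subset_Iic_self,
    integral_Icc_eq_integral_Ioc, ← intervalIntegral.integral_of_le hy]
  · refine intervalIntegral.integral_congr fun x hx ↦ ?_
    rw [uIcc_of_le hy] at hx
    exact gammaPDFReal_natCast_add_one m hx.1
  · rintro x ⟨hxy, hx⟩
    have hneg : ¬0 ≤ x := fun h0 ↦ hx ⟨h0, hxy⟩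
    simp [gammaPDFReal, hneg]

theorem gammaMeasure_Ici {a r : ℝ} (ha : 0 < a) (hr : 0 < r) (y : ℝ) :
    gammaMeasure a r (Ici y) = ENNReal.ofReal (1 - cdf (gammaMeasure a r) y) := by
  have := isProbabilityMeasure_gammaMeasure ha hr
  have : NullSingletonClass (gammaMeasure a r) := by unfold gammaMeasure; infer_instance
  rw [← measure_congr Ioi_ae_eq_Ici, ← compl_Iic, prob_compl_eq_one_sub measurableSet_Iic,
    ← ofReal_cdf, ENNReal.ofReal_sub _ (cdf_nonneg _ _), ENNReal.ofReal_one]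

theorem pow_mul_exp_neg_div_factorial_eq {m : ℕ} {b : ℝ} (hbm : b ^ (m + 1) * (m + 1)! = 1)
    {x : ℝ} (hbx : 0 < b * x) :
    x ^ m * exp (-x) / m ! = (m + 1) * b * exp (-(b * x)) * (1 - exp (-(b * x))) ^ m *
      exp ((b - 1) * x + m * (log (b * x) - log (1 - exp (-(b * x))))) := by
  have hE := one_sub_exp_neg_pos hbx
  have hexp : exp (-(b * x)) * exp ((b - 1) * x) = exp (-x) := by rw [← exp_add]; ring_nf
  rw [exp_add, exp_nat_mul, exp_sub, exp_log hbx, exp_log hE, div_pow, mul_pow]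
  push_cast [Nat.factorial_succ] at hbm
  -- opaque names keep `field_simp` from normalizing the arguments of `exp`
  set E := 1 - exp (-(b * x))
  set A := exp (-(b * x))
  set B := exp ((b - 1) * x)
  field_simp
  linear_combination (-(x ^ m * exp (-x))) * hbm
    - x ^ m * m ! * (m + 1) * b ^ (m + 1) * hexp

theorem log_density_ratio_nonneg_of_le {m : ℕ} {b : ℝ} (hb : 0 < b) {t x : ℝ} (ht : 0 < t)
    (htx : t ≤ x) (hx : 0 ≤ (b - 1) * x + m * (log (b * x) - log (1 - exp (-(b * x))))) :
    0 ≤ (b - 1) * t + m * (log (b * t) - log (1 - exp (-(b * t)))) := by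
  set g : ℝ → ℝ := fun u ↦ log u - log (1 - exp (-u))
  have hbt : 0 < b * t := mul_pos hb ht
  have hbx : 0 < b * x := hbt.trans_le (by gcongr)
  have hg : g (b * x) / (b * x) ≤ g (b * t) / (b * t) :=
    concaveOn_log_sub_log_one_sub_exp_neg.antitoneOn_div_self_of_tendsto_zero
      tendsto_log_sub_log_one_sub_exp_neg_nhdsGT_zero hbt hbx (by gcongr)
  rw [div_le_div_iff₀ hbx hbt] at hg
  have hcross : t * g (b * x) ≤ x * g (b * t) := le_of_mul_le_mul_left (by linarith) hb
  have hscaled : t * ((b - 1) * x + m * g (b * x)) ≤ x * ((b - 1) * t + m * g (b * t)) := by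
    linarith [mul_le_mul_of_nonneg_left hcross m.cast_nonneg]
  exact nonneg_of_mul_nonneg_right ((mul_nonneg ht.le hx).trans hscaled) (ht.trans_le htx)

theorem pow_one_sub_exp_neg_le_cdf_gammaMeasure {m : ℕ} {b : ℝ} (hb : 0 < b)
    (hbm : b ^ (m + 1) * (m + 1)! = 1) {y : ℝ} (hy : 0 ≤ y) :
    (1 - exp (-(b * y))) ^ (m + 1) ≤ cdf (gammaMeasure ((m + 1 : ℕ) : ℝ) 1) y := by
  set p : ℝ → ℝ := fun x ↦ x ^ m * exp (-x) / (m ! : ℝ)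
  set q : ℝ → ℝ := fun x ↦ (m + 1) * b * exp (-(b * x)) * (1 - exp (-(b * x))) ^ m
  have hF : ∀ x, HasDerivAt (fun y ↦ ∫ x in 0..y, p x) (p x) x := fun x ↦
    ((by fun_prop : Continuous p).integral_hasStrictDerivAt 0 x).hasDerivAt
  have hB : ∀ x, HasDerivAt (fun x ↦ (1 - exp (-(b * x))) ^ (m + 1)) (q x) x := fun x ↦ by
    refine ((((hasDerivAt_id' x).const_mul b).fun_neg.exp.const_sub 1).fun_pow
      (m + 1)).congr_deriv ?_
    simp only [q, Nat.cast_add_one, add_tsub_cancel_right]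
    ring
  have hlimF : Tendsto (fun y ↦ ∫ x in 0..y, p x) atTop (𝓝 1) :=
    Tendsto.congr' ((eventually_ge_atTop 0).mono fun y hy ↦
      cdf_gammaMeasure_natCast_add_one m hy) (tendsto_cdf_atTop _)
  have hlimB : Tendsto (fun x ↦ (1 - exp (-(b * x))) ^ (m + 1)) atTop (𝓝 1) := by
    have := ((tendsto_exp_atBot.comp (tendsto_neg_atTop_atBot.comp
      (tendsto_id.const_mul_atTop hb))).const_sub 1).pow (m + 1)
    simpa using this
  have hsign : ∀ ⦃t x⦄, 0 < t → t ≤ x → 0 ≤ p x - q x → 0 ≤ p t - q t := by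
    set h : ℝ → ℝ := fun x ↦ (b - 1) * x + m * (log (b * x) - log (1 - exp (-(b * x))))
    have hiff : ∀ x, 0 < x → (0 ≤ p x - q x ↔ 0 ≤ h x) := fun x hx ↦ by
      have : 0 < q x := by
        have := one_sub_exp_neg_pos (mul_pos hb hx)
        positivity
      rw [show p x = q x * exp (h x) from pow_mul_exp_neg_div_factorial_eq hbm (mul_pos hb hx),
        ← mul_sub_one, mul_nonneg_iff_of_pos_left this, sub_nonneg, one_le_exp_iff]
    intro t x ht htx hx
    exact (hiff t ht).2
      (log_density_ratio_nonneg_of_le hb ht htx ((hiff x (ht.trans_le htx)).1 hx))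
  have := nonneg_of_hasDerivAt_nonneg_then_nonpos (fun x ↦ (hF x).fun_sub (hB x))
    (by simp) (by simpa using hlimF.sub hlimB) hsign hy
  rw [cdf_gammaMeasure_natCast_add_one m hy]
  linarith

theorem gammaMeasure_Ici_le {m : ℕ} {b : ℝ} (hb : 0 < b) (hbm : b ^ (m + 1) * (m + 1)! = 1)
    {y : ℝ} (hy : 0 ≤ y) :
    gammaMeasure ((m + 1 : ℕ) : ℝ) 1 (Ici y) ≤
      ENNReal.ofReal (1 - (1 - exp (-(b * y))) ^ (m + 1)) := by
  rw [gammaMeasure_Ici (by positivity) one_pos]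
  exact ENNReal.ofReal_le_ofReal (by linarith [pow_one_sub_exp_neg_le_cdf_gammaMeasure hb hbm hy])

theorem one_sub_one_sub_pow {R : Type*} [CommRing R] (t : R) (N : ℕ) :
    1 - (1 - t) ^ N = ∑ n ∈ Finset.Icc 1 N, (N.choose n : R) * (-1) ^ (n + 1) * t ^ n := by
  rw [← neg_add_eq_sub t, add_pow, Finset.range_eq_Ico,
    Finset.sum_eq_sum_Ico_succ_bot (by positivity : 0 < N + 1), zero_add,
    Finset.Ico_add_one_right_eq_Icc]
  simp only [pow_zero, one_pow, mul_one, Nat.choose_zero_right, Nat.cast_one,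
    sub_add_cancel_left, ← Finset.sum_neg_distrib]
  refine Finset.sum_congr rfl fun n _ ↦ ?_
  rw [neg_pow]
  ring

section Probability

variable {Ω : Type*} [MeasurableSpace Ω] {P : Measure Ω}

theorem ProbabilityTheory.IndepFun.measure_preimage_eq_lintegral [IsFiniteMeasure P]
    {α β : Type*} [MeasurableSpace α] [MeasurableSpace β] {X : Ω → α} {Y : Ω → β}
    (hX : Measurable X) (hY : Measurable Y) (hXY : IndepFun X Y P) {S : Set (α × β)}
    (hS : MeasurableSet S) :
    P ((fun ω ↦ (X ω, Y ω)) ⁻¹' S) = ∫⁻ ω, P.map Y (Prod.mk (X ω) ⁻¹' S) ∂P := by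
  rw [← Measure.map_apply (hX.prodMk hY) hS,
    (indepFun_iff_map_prod_eq_prod_map_map hX.aemeasurable hY.aemeasurable).1 hXY,
    Measure.prod_apply hS, lintegral_map (measurable_measure_prodMk_left hS) hX]

theorem lintegral_ofReal_one_sub_one_sub_pow [IsFiniteMeasure P] {T : Ω → ℝ}
    (hT : AEStronglyMeasurable T P) (hT0 : ∀ ω, 0 ≤ T ω) (hT1 : ∀ ω, T ω ≤ 1) (N : ℕ) :
    ∫⁻ ω, ENNReal.ofReal (1 - (1 - T ω) ^ N) ∂P =
      ENNReal.ofReal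
        (∑ n ∈ Finset.Icc 1 N, (N.choose n : ℝ) * (-1) ^ (n + 1) * ∫ ω, T ω ^ n ∂P) := by
  have hpow : ∀ n : ℕ, Integrable (fun ω ↦ T ω ^ n) P := fun n ↦
    .of_bound (hT.pow n) 1 (.of_forall fun ω ↦ by
      rw [norm_pow, Real.norm_of_nonneg (hT0 ω)]
      exact pow_le_one₀ (hT0 ω) (hT1 ω))
  have hnonneg : ∀ ω, 0 ≤ 1 - (1 - T ω) ^ N := fun ω ↦
    sub_nonneg.2 (pow_le_one₀ (by linarith [hT1 ω]) (by linarith [hT0 ω]))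
  simp_rw [one_sub_one_sub_pow] at hnonneg ⊢
  rw [← ofReal_integral_eq_lintegral_ofReal _ (.of_forall hnonneg), integral_finsetSum]
  · simp_rw [integral_const_mul]
  · exact fun n _ ↦ (hpow n).const_mul _
  · exact integrable_finsetSum _ fun n _ ↦ (hpow n).const_mul _

end Probability

/-- Approximation device of Theorems 2 and 3: for `G ∼ gamma(N, 1)` independent of a
nonnegative random variable `W`, `κ = (N!)^(-1/N)` and `s ≥ 0`,
`Pr(G ≥ s W) ≤ ∑_{n=1}^{N} C(N,n) (-1)^{n+1} E[exp (-n κ s W)]`. -/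
theorem stmt_14 {Ω : Type*} [MeasureSpace Ω] (P : Measure Ω) [IsProbabilityMeasure P]
    (N : ℕ) (hN : 0 < N) (G W : Ω → ℝ) (hGmeas : Measurable G) (hWmeas : Measurable W)
    (hWpos : ∀ ω, 0 ≤ W ω) (hG : Measure.map G P = gammaMeasure (N : ℝ) 1)
    (hindep : IndepFun G W P)
    (κ : ℝ) (hκ : κ = ((N.factorial : ℝ)) ^ (-(1 / (N : ℝ))))
    (s : ℝ) (hs : 0 ≤ s) :
    P {ω | s * W ω ≤ G ω} ≤
      ENNReal.ofReal (∑ n ∈ Finset.Icc 1 N,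
        (N.choose n : ℝ) * (-1 : ℝ) ^ (n + 1) *
          ∫ ω, Real.exp (-((n : ℝ) * κ * s * W ω)) ∂P) := by
  obtain ⟨m, rfl⟩ := Nat.exists_eq_add_one_of_ne_zero hN.ne'
  have hfac : (0 : ℝ) < (m + 1)! := by positivity
  have hκpos : 0 < κ := hκ ▸ rpow_pos_of_pos hfac _
  have hκm : κ ^ (m + 1) * (m + 1)! = 1 := by
    rw [hκ, ← rpow_natCast, ← rpow_mul hfac.le, neg_mul, one_div_mul_cancel (by positivity),
      rpow_neg_one, inv_mul_cancel₀ hfac.ne']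
  have hT : ∀ ω, exp (-(κ * (s * W ω))) ≤ 1 := fun ω ↦
    exp_le_one_iff.2 (neg_nonpos.2 (by have := hWpos ω; positivity))
  calc P {ω | s * W ω ≤ G ω} = ∫⁻ ω, P.map G (Ici (s * W ω)) ∂P :=
        hindep.symm.measure_preimage_eq_lintegral hWmeas hGmeas
          (measurableSet_le (measurable_fst.const_mul s) measurable_snd)
    _ ≤ ∫⁻ ω, ENNReal.ofReal (1 - (1 - exp (-(κ * (s * W ω)))) ^ (m + 1)) ∂P :=
        lintegral_mono fun ω ↦ hG ▸ gammaMeasure_Ici_le hκpos hκm (by have := hWpos ω; positivity)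
    _ = _ := by
        rw [lintegral_ofReal_one_sub_one_sub_pow (by fun_prop) (fun ω ↦ (exp_pos _).le) hT]
        congr! 5 with n - ω
        rw [← exp_nat_mul]
        ring_nf
end

section
/- For all real numbers c > 0, λ_e ≥ 0 and τ > 0, the limit as n → +∞ of 4c · exp(−2n ∫₀^τ (1 − exp(−(2c/n) √(τ² − r²))) dr) · (∫₀^τ (τ / √(τ² − r²)) exp(−(2c/n) √(τ² − r²)) dr) · exp(−λ_e π τ²) equals 2cπτ · exp(−(c + λ_e) π τ²). -/
/-!
Write `s r = √(τ² - r²)`, which is bounded by `τ`. As `n → ∞`, dominated convergence gives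
`2n ∫₀^τ (1 - e^{-2cs/n}) → 4c ∫₀^τ s = cπτ²` (the quarter-disc area) and
`∫₀^τ (τ/s) e^{-2cs/n} → ∫₀^τ τ/s = τπ/2` (an `arcsin` primitive, which also makes `τ/s`
integrable). Hence the limit is `4c e^{-cπτ²} (τπ/2) e^{-λₑπτ²} = 2cπτ e^{-(c+λₑ)πτ²}`.
-/

open Filter Real MeasureTheory Set Topology

theorem HasDerivAt.tendsto_mul_sub_inv_atTop {f : ℝ → ℝ} {f' : ℝ} (hf : HasDerivAt f f' 0) :
    Tendsto (fun n : ℝ => n * (f n⁻¹ - f 0)) atTop (𝓝 f') := by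
  simpa [Function.comp_def] using hf.tendsto_slope_zero_right.comp tendsto_inv_atTop_nhdsGT_zero

section DominatedLimits

variable {α : Type*} [MeasurableSpace α] {μ : Measure α} {s : α → ℝ} {M : ℝ}

theorem eventually_abs_div_mul_le_one (a : ℝ) (hsM : ∀ᵐ x ∂μ, |s x| ≤ M) :
    ∀ᶠ n : ℝ in atTop, ∀ᵐ x ∂μ, |a / n * s x| ≤ 1 := by
  filter_upwards [eventually_gt_atTop 0, eventually_ge_atTop (|a| * M)] with n hn hnM
  filter_upwards [hsM] with x hx
  rw [abs_mul, abs_div, abs_of_pos hn, div_mul_eq_mul_div, div_le_one hn]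
  exact (mul_le_mul_of_nonneg_left hx (abs_nonneg a)).trans hnM

theorem tendsto_integral_mul_exp_neg_div_atTop {g : α → ℝ} (a : ℝ) (hg : Integrable g μ)
    (hs : AEStronglyMeasurable s μ) (hsM : ∀ᵐ x ∂μ, |s x| ≤ M) :
    Tendsto (fun n : ℝ => ∫ x, g x * exp (-(a / n * s x)) ∂μ) atTop (𝓝 (∫ x, g x ∂μ)) := by
  refine tendsto_integral_filter_of_dominated_convergence (fun x => |g x| * exp 1)
    (Eventually.of_forall fun n => hg.aestronglyMeasurable.mul (by fun_prop))
    ?_ (hg.abs.mul_const _) (ae_of_all _ fun x => ?_)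
  · filter_upwards [eventually_abs_div_mul_le_one a hsM] with n hn
    filter_upwards [hn] with x hx
    rw [norm_mul, norm_of_nonneg (exp_pos _).le, Real.norm_eq_abs]
    gcongr
    linarith [neg_le_abs (a / n * s x)]
  · have hlim : Tendsto (fun n : ℝ => a / n * s x) atTop (𝓝 0) := by
      simpa using (tendsto_id.const_div_atTop a).mul_const (s x)
    simpa using ((continuous_exp.tendsto 0).comp (by simpa using hlim.neg)).const_mul (g x)

theorem tendsto_mul_integral_one_sub_exp_neg_div_atTop [IsFiniteMeasure μ] (a : ℝ)
    (hs : AEStronglyMeasurable s μ) (hsM : ∀ᵐ x ∂μ, |s x| ≤ M) :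
    Tendsto (fun n : ℝ => n * ∫ x, (1 - exp (-(a / n * s x))) ∂μ) atTop
      (𝓝 (a * ∫ x, s x ∂μ)) := by
  simp_rw [← integral_const_mul]
  refine tendsto_integral_filter_of_dominated_convergence (fun _ => 2 * |a| * M)
    (Eventually.of_forall fun n => by fun_prop) ?_ (integrable_const _) (ae_of_all _ fun x => ?_)
  · filter_upwards [eventually_gt_atTop 0, eventually_abs_div_mul_le_one a hsM] with n hn hsn
    filter_upwards [hsn, hsM] with x hx hxM
    have hexp := abs_exp_sub_one_le (x := -(a / n * s x)) (by rwa [abs_neg])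
    rw [abs_neg, abs_sub_comm] at hexp
    calc ‖n * (1 - exp (-(a / n * s x)))‖ = n * |1 - exp (-(a / n * s x))| := by
          rw [Real.norm_eq_abs, abs_mul, abs_of_pos hn]
      _ ≤ n * (2 * |a / n * s x|) := by gcongr
      _ = 2 * |a| * |s x| := by
          rw [abs_mul, abs_div, abs_of_pos hn]; field_simp
      _ ≤ 2 * |a| * M := by gcongr
  · have hderiv : HasDerivAt (fun t => 1 - exp (-(a * t * s x))) (a * s x) 0 := by
      refine ((((hasDerivAt_id (0 : ℝ)).const_mul a).mul_const (s x)).neg.exp.const_sub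
        1).congr_deriv ?_
      simp
    simpa [div_eq_mul_inv] using hderiv.tendsto_mul_sub_inv_atTop

end DominatedLimits

section QuarterDisc

variable {τ : ℝ}

theorem abs_sqrt_sq_sub_sq_le (hτ : 0 ≤ τ) (r : ℝ) : |√(τ ^ 2 - r ^ 2)| ≤ τ := by
  rw [abs_of_nonneg (sqrt_nonneg _), sqrt_le_left hτ]
  nlinarith

theorem integral_sqrt_sq_sub_sq (hτ : 0 ≤ τ) :
    ∫ r in (0 : ℝ)..τ, √(τ ^ 2 - r ^ 2) = π * τ ^ 2 / 4 := by
  have hcont : Continuous fun r : ℝ => √(τ ^ 2 - r ^ 2) := by fun_prop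
  have hscale : ∀ x : ℝ, √(τ ^ 2 - (τ * x) ^ 2) = τ * √(1 - x ^ 2) := fun x => by
    rw [show τ ^ 2 - (τ * x) ^ 2 = τ ^ 2 * (1 - x ^ 2) by ring, sqrt_mul (sq_nonneg τ),
      sqrt_sq hτ]
  have hfull : ∫ r in -τ..τ, √(τ ^ 2 - r ^ 2) = π * τ ^ 2 / 2 := by
    have := intervalIntegral.smul_integral_comp_mul_left (a := -1) (b := 1)
      (fun r => √(τ ^ 2 - r ^ 2)) τ
    simp only [hscale, intervalIntegral.integral_const_mul, integral_sqrt_one_sub_sq,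
      smul_eq_mul, mul_neg, mul_one] at this
    rw [← this]; ring
  have hsymm : ∫ r in -τ..0, √(τ ^ 2 - r ^ 2) = ∫ r in (0 : ℝ)..τ, √(τ ^ 2 - r ^ 2) := by
    have := intervalIntegral.integral_comp_neg (a := 0) (b := τ) fun r => √(τ ^ 2 - r ^ 2)
    simp only [neg_sq, neg_zero] at this
    exact this.symm
  have hsplit := intervalIntegral.integral_add_adjacent_intervals
    (hcont.intervalIntegrable (μ := volume) (-τ) 0) (hcont.intervalIntegrable 0 τ)
  linarith

theorem hasDerivAt_arcsin_div (hτ : 0 < τ) {r : ℝ} (hr : r ∈ Ioo (-τ) τ) :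
    HasDerivAt (fun x => arcsin (x / τ)) (√(τ ^ 2 - r ^ 2))⁻¹ r := by
  have hr' : r / τ ∈ Ioo (-1) 1 := by
    constructor
    · rw [lt_div_iff₀ hτ]; linarith [hr.1]
    · rw [div_lt_one hτ]; exact hr.2
  refine ((hasDerivAt_arcsin hr'.1.ne' hr'.2.ne).comp r
    ((hasDerivAt_id r).div_const τ)).congr_deriv ?_
  rw [show 1 - (r / τ) ^ 2 = (τ ^ 2 - r ^ 2) / τ ^ 2 by field_simp, sqrt_div' _ (sq_nonneg τ),
    sqrt_sq hτ.le]
  field_simp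

theorem integrableOn_inv_sqrt_sq_sub_sq (hτ : 0 < τ) :
    IntegrableOn (fun r => (√(τ ^ 2 - r ^ 2))⁻¹) (Ioc 0 τ) :=
  intervalIntegral.integrableOn_deriv_of_nonneg (by fun_prop)
    (fun r hr => hasDerivAt_arcsin_div hτ ⟨by linarith [hr.1], hr.2⟩)
    (fun _ _ => inv_nonneg.2 (sqrt_nonneg _))

theorem integral_inv_sqrt_sq_sub_sq (hτ : 0 < τ) :
    ∫ r in (0 : ℝ)..τ, (√(τ ^ 2 - r ^ 2))⁻¹ = π / 2 := by
  rw [intervalIntegral.integral_eq_sub_of_hasDerivAt_of_le hτ.le (by fun_prop)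
    (fun r hr => hasDerivAt_arcsin_div hτ ⟨by linarith [hr.1], hr.2⟩)
    ((intervalIntegrable_iff_integrableOn_Ioc_of_le hτ.le).2
      (integrableOn_inv_sqrt_sq_sub_sq hτ))]
  simp [hτ.ne']

end QuarterDisc

theorem stmt_16_general (c lam_e τ : ℝ) (hτ : 0 < τ) :
    Tendsto
      (fun n : ℝ =>
        4 * c *
          Real.exp (-(2 * n * ∫ r in (0 : ℝ)..τ,
            (1 - Real.exp (-((2 * c / n) * Real.sqrt (τ ^ 2 - r ^ 2)))))) *
          (∫ r in (0 : ℝ)..τ,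
            (τ / Real.sqrt (τ ^ 2 - r ^ 2)) *
              Real.exp (-((2 * c / n) * Real.sqrt (τ ^ 2 - r ^ 2)))) *
          Real.exp (-(lam_e * π * τ ^ 2)))
      atTop (nhds (2 * c * π * τ * Real.exp (-((c + lam_e) * π * τ ^ 2)))) := by
  have hs : AEStronglyMeasurable (fun r : ℝ => √(τ ^ 2 - r ^ 2)) (volume.restrict (Ioc 0 τ)) := by
    fun_prop
  have hsM := ae_of_all (volume.restrict (Ioc 0 τ)) (abs_sqrt_sq_sub_sq_le hτ.le)
  have hg : Integrable (fun r => τ / √(τ ^ 2 - r ^ 2)) (volume.restrict (Ioc 0 τ)) := by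
    simpa only [div_eq_mul_inv] using (integrableOn_inv_sqrt_sq_sub_sq hτ).const_mul τ
  have hexponent := (tendsto_mul_integral_one_sub_exp_neg_div_atTop (2 * c) hs hsM).const_mul 2
  have hweight := tendsto_integral_mul_exp_neg_div_atTop (2 * c) hg hs hsM
  simp only [← intervalIntegral.integral_of_le hτ.le, div_eq_mul_inv τ,
    intervalIntegral.integral_const_mul, integral_sqrt_sq_sub_sq hτ.le,
    integral_inv_sqrt_sq_sub_sq hτ] at hexponent hweight
  convert ((hexponent.neg.rexp.const_mul (4 * c)).mul hweight).mul_const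
    (exp (-(lam_e * π * τ ^ 2))) using 1
  · simp only [div_eq_mul_inv τ, mul_assoc (2 : ℝ)]
  · congr 1
    rw [show -((c + lam_e) * π * τ ^ 2) = -(2 * (2 * c * (π * τ ^ 2 / 4))) + -(lam_e * π * τ ^ 2)
      by ring, exp_add]
    ring

/-- Equation (29) of Lemma 4: with line intensity `n` and vehicular eavesdropper
intensity `c/n`, the pdf of the minimum eavesdropper distance (nearest eavesdropper
a vehicular node) converges to the nearest-point pdf `2 c π τ exp (-(c+λₑ) π τ²)`
of a 2D PPP of intensity `c + λₑ`. -/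
theorem stmt_16 (c lam_e τ : ℝ) (hc : 0 < c) (hlam : 0 ≤ lam_e) (hτ : 0 < τ) :
    Tendsto
      (fun n : ℝ =>
        4 * c *
          Real.exp (-(2 * n * ∫ r in (0 : ℝ)..τ,
            (1 - Real.exp (-((2 * c / n) * Real.sqrt (τ ^ 2 - r ^ 2)))))) *
          (∫ r in (0 : ℝ)..τ,
            (τ / Real.sqrt (τ ^ 2 - r ^ 2)) *
              Real.exp (-((2 * c / n) * Real.sqrt (τ ^ 2 - r ^ 2)))) *
          Real.exp (-(lam_e * π * τ ^ 2)))
      atTop (nhds (2 * c * π * τ * Real.exp (-((c + lam_e) * π * τ ^ 2)))) :=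
  stmt_16_general c lam_e τ hτ
end
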